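/- For every n ≥ 1, V_{3,n} ≤ 4 V₁, where V_{3,n} = Σ_a E[ 1{n(a)>0} · n/n(a) − 1/π_D(a) ] · π(a)² σ²_Φ(a) and V₁ = Σ_a π(a)² σ²_Φ(a)/π_D(a). Moreover, if n · min_a π_D(a) ≥ 34, then V_{3,n} ≤ 2 V₁ · √(2/(n π_D*)) · ( √((3/2) ln(n π_D*/2)) + 1 ), where π_D* = min_a π_D(a). -/

import Mathlib

open MeasureTheory ENNReal

noncomputable section

namespace OffPolicy

variable {K : ℕ}

/-- `π` is a probability mass function on the action set. -/
def IsPolicy (π : Fin K → ℝ) : Prop := (∀ a, 0 ≤ π a) ∧ ∑ a, π a = 1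

/-- A behavior policy: a pmf with everywhere positive probabilities. -/
def IsBehaviorPolicy (πD : Fin K → ℝ) : Prop := (∀ a, 0 < πD a) ∧ ∑ a, πD a = 1

/-- The distribution of a single action `A ~ π_D`. -/
def actionMeasure (πD : Fin K → ℝ) : Measure (Fin K) :=
  ∑ a : Fin K, (πD a).toNNReal • Measure.dirac a

instance actionMeasure_finite (πD : Fin K → ℝ) : IsFiniteMeasure (actionMeasure πD) := by
  unfold actionMeasure; infer_instance

/-- The distribution of the i.i.d. actions `A_1, …, A_n`. -/
def actionData (n : ℕ) (πD : Fin K → ℝ) : Measure (Fin n → Fin K) :=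
  Measure.pi fun _ => actionMeasure πD

/-- `n(a) = #{i : A_i = a}`. -/
def cntA (n : ℕ) (d : Fin n → Fin K) (a : Fin K) : ℕ :=
  (Finset.univ.filter fun i => d i = a).card

/-!
The count `n(a)` is binomial with parameters `n` and `p = π_D(a)`. The identities
`C(n,k)/(k+1) = C(n+1,k+1)/(n+1)` and `C(n,k)/((k+1)(k+2)) = C(n+2,k+2)/((n+1)(n+2))` turn
`E[1/(n(a)+1)]` and `E[1/((n(a)+1)(n(a)+2))]` into tails of binomial expansions of `1`, whence the
bounds `1/((n+1)p)` and `1/((n+1)(n+2)p²)`. Since `1{k>0}/k ≤ 2/(k+1)` and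
`1{k>0}/k ≤ 1/(k+1) + 3/((k+1)(k+2))`, each summand of `V_{3,n}` is at most `π(a)²σ²(a)/p`, and
also at most `3/(n π_D*)` times it; finally `3/x ≤ 2√(2/x)` once `x ≥ 9/8`.
-/

open Finset

def binomialExpectation (n : ℕ) (p : ℝ) (g : ℕ → ℝ) : ℝ :=
  ∑ k ∈ range (n + 1), n.choose k * p ^ k * (1 - p) ^ (n - k) * g k

lemma inv_count_le_two_mul_div_succ (n k : ℕ) :
    (if 0 < k then (n : ℝ) / k else 0) ≤ 2 * n * (1 / (k + 1)) := by
  split_ifs with hk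
  · have hk1 : (1 : ℝ) ≤ k := by exact_mod_cast hk
    rw [div_le_iff₀ (by positivity)]
    field_simp
    nlinarith [(n.cast_nonneg : (0 : ℝ) ≤ n)]
  · positivity

lemma inv_count_le_div_succ_add (n k : ℕ) :
    (if 0 < k then (n : ℝ) / k else 0)
      ≤ n * (1 / (k + 1)) + 3 * n * (1 / ((k + 1) * (k + 2))) := by
  split_ifs with hk
  · have hk1 : (1 : ℝ) ≤ k := by exact_mod_cast hk
    rw [div_le_iff₀ (by positivity)]
    field_simp
    nlinarith [(n.cast_nonneg : (0 : ℝ) ≤ n)]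
  · positivity

section Binomial

variable {n : ℕ} {p : ℝ}

lemma binomialExpectation_const (n : ℕ) (p c : ℝ) :
    binomialExpectation n p (fun _ => c) = c := by
  have h := add_pow p (1 - p) n
  rw [add_sub_cancel, one_pow] at h
  rw [binomialExpectation, ← sum_mul]
  convert one_mul c using 2
  exact (h.trans (sum_congr rfl fun k _ => by ring)).symm

lemma binomialExpectation_sub_const (g : ℕ → ℝ) (c : ℝ) :
    binomialExpectation n p (fun k => g k - c) = binomialExpectation n p g - c := by
  conv_rhs => rw [← binomialExpectation_const n p c]
  simp only [binomialExpectation, mul_sub, sum_sub_distrib]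

lemma binomialExpectation_add (g h : ℕ → ℝ) :
    binomialExpectation n p (fun k => g k + h k)
      = binomialExpectation n p g + binomialExpectation n p h := by
  simp only [binomialExpectation, mul_add, sum_add_distrib]

lemma binomialExpectation_const_mul (c : ℝ) (g : ℕ → ℝ) :
    binomialExpectation n p (fun k => c * g k) = c * binomialExpectation n p g := by
  simp only [binomialExpectation, mul_sum]
  exact sum_congr rfl fun k _ => by ring

lemma binomialExpectation_mono (hp0 : 0 ≤ p) (hp1 : p ≤ 1) {g h : ℕ → ℝ}
    (hgh : ∀ k, g k ≤ h k) : binomialExpectation n p g ≤ binomialExpectation n p h :=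
  sum_le_sum fun k _ =>
    mul_le_mul_of_nonneg_left (hgh k) (by have := sub_nonneg.2 hp1; positivity)

lemma sum_choose_add_mul_pow_le_one (hp0 : 0 ≤ p) (hp1 : p ≤ 1) (n j : ℕ) :
    ∑ k ∈ range (n + 1), ((n + j).choose (k + j) : ℝ) * p ^ (k + j) * (1 - p) ^ (n - k) ≤ 1 := by
  have hq := sub_nonneg.2 hp1
  have h := (add_pow p (1 - p) (n + j)).symm
  rw [add_sub_cancel, one_pow, show n + j + 1 = j + (n + 1) by omega, sum_range_add] at h
  have hhead : 0 ≤ ∑ k ∈ range j, p ^ k * (1 - p) ^ (n + j - k) * ((n + j).choose k : ℝ) :=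
    sum_nonneg fun k _ => by positivity
  have htail : ∀ k ∈ range (n + 1),
      p ^ (j + k) * (1 - p) ^ (n + j - (j + k)) * ((n + j).choose (j + k) : ℝ)
        = ((n + j).choose (k + j) : ℝ) * p ^ (k + j) * (1 - p) ^ (n - k) := fun k _ => by
    rw [show n + j - (j + k) = n - k by omega, add_comm j k]; ring
  rw [sum_congr rfl htail] at h
  linarith

lemma binomialExpectation_inv_succ_le (hp0 : 0 < p) (hp1 : p ≤ 1) :
    binomialExpectation n p (fun k => 1 / (k + 1)) ≤ 1 / ((n + 1) * p) := by
  rw [le_div_iff₀ (by positivity), binomialExpectation, sum_mul]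
  have hterm : ∀ k ∈ range (n + 1),
      (n.choose k : ℝ) * p ^ k * (1 - p) ^ (n - k) * (1 / (k + 1)) * ((n + 1) * p)
        = ((n + 1).choose (k + 1) : ℝ) * p ^ (k + 1) * (1 - p) ^ (n - k) := fun k _ => by
    have h : ((n : ℝ) + 1) * n.choose k = (n + 1).choose (k + 1) * ((k : ℝ) + 1) := by
      exact_mod_cast Nat.add_one_mul_choose_eq n k
    field_simp
    linear_combination (p ^ (k + 1) * (1 - p) ^ (n - k)) * h
  rw [sum_congr rfl hterm]
  exact sum_choose_add_mul_pow_le_one hp0.le hp1 n 1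

lemma binomialExpectation_inv_succ_mul_succ_le (hp0 : 0 < p) (hp1 : p ≤ 1) :
    binomialExpectation n p (fun k => 1 / ((k + 1) * (k + 2)))
      ≤ 1 / ((n + 1) * (n + 2) * p ^ 2) := by
  rw [le_div_iff₀ (by positivity), binomialExpectation, sum_mul]
  have hterm : ∀ k ∈ range (n + 1),
      (n.choose k : ℝ) * p ^ k * (1 - p) ^ (n - k) * (1 / ((k + 1) * (k + 2)))
          * ((n + 1) * (n + 2) * p ^ 2)
        = ((n + 2).choose (k + 2) : ℝ) * p ^ (k + 2) * (1 - p) ^ (n - k) := fun k _ => by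
    have h1 : ((n : ℝ) + 1) * n.choose k = (n + 1).choose (k + 1) * ((k : ℝ) + 1) := by
      exact_mod_cast Nat.add_one_mul_choose_eq n k
    have h2 : ((n : ℝ) + 2) * (n + 1).choose (k + 1) = (n + 2).choose (k + 2) * ((k : ℝ) + 2) := by
      exact_mod_cast Nat.add_one_mul_choose_eq (n + 1) (k + 1)
    field_simp
    linear_combination (((n : ℝ) + 2) * p ^ (k + 2) * (1 - p) ^ (n - k)) * h1
      + (((k : ℝ) + 1) * p ^ (k + 2) * (1 - p) ^ (n - k)) * h2
  rw [sum_congr rfl hterm]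
  exact sum_choose_add_mul_pow_le_one hp0.le hp1 n 2

lemma binomialExpectation_inv_count_le_two_div (hp0 : 0 < p) (hp1 : p ≤ 1) :
    binomialExpectation n p (fun k => if 0 < k then (n : ℝ) / k else 0) ≤ 2 / p :=
  calc binomialExpectation n p (fun k => if 0 < k then (n : ℝ) / k else 0)
      ≤ binomialExpectation n p (fun k => 2 * n * (1 / (k + 1))) :=
        binomialExpectation_mono hp0.le hp1 (inv_count_le_two_mul_div_succ n)
    _ = 2 * n * binomialExpectation n p (fun k => 1 / (k + 1)) :=
        binomialExpectation_const_mul _ _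
    _ ≤ 2 * n * (1 / ((n + 1) * p)) := by
        gcongr; exact binomialExpectation_inv_succ_le hp0 hp1
    _ ≤ 2 / p := by
        rw [mul_one_div, div_le_div_iff₀ (by positivity) hp0]; nlinarith

lemma binomialExpectation_inv_count_le_inv_add (hp0 : 0 < p) (hp1 : p ≤ 1) :
    binomialExpectation n p (fun k => if 0 < k then (n : ℝ) / k else 0)
      ≤ 1 / p + 3 / (n * p ^ 2) :=
  calc binomialExpectation n p (fun k => if 0 < k then (n : ℝ) / k else 0)
      ≤ binomialExpectation n p
          (fun k => n * (1 / (k + 1)) + 3 * n * (1 / ((k + 1) * (k + 2)))) :=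
        binomialExpectation_mono hp0.le hp1 (inv_count_le_div_succ_add n)
    _ = n * binomialExpectation n p (fun k => 1 / (k + 1))
          + 3 * n * binomialExpectation n p (fun k => 1 / ((k + 1) * (k + 2))) := by
        rw [binomialExpectation_add, binomialExpectation_const_mul,
          binomialExpectation_const_mul]
    _ ≤ n * (1 / ((n + 1) * p)) + 3 * n * (1 / ((n + 1) * (n + 2) * p ^ 2)) := by
        gcongr
        · exact binomialExpectation_inv_succ_le hp0 hp1
        · exact binomialExpectation_inv_succ_mul_succ_le hp0 hp1
    _ ≤ 1 / p + 3 / (n * p ^ 2) := by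
        have h1 : n * (1 / ((n + 1) * p)) ≤ 1 / p := by
          rw [mul_one_div, div_le_div_iff₀ (by positivity) hp0]; nlinarith
        have h2 : 3 * n * (1 / ((n + 1) * (n + 2) * p ^ 2)) ≤ 3 / (n * p ^ 2) := by
          rw [mul_one_div]
          rcases n.eq_zero_or_pos with rfl | hn
          · simp
          rw [div_le_div_iff₀ (by positivity) (by positivity)]
          have : (0 : ℝ) < n := by exact_mod_cast hn
          nlinarith [pow_pos hp0 2]
        linarith

end Binomial

lemma actionMeasure_singleton (πD : Fin K → ℝ) (b : Fin K) :
    actionMeasure πD {b} = (πD b).toNNReal := by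
  rw [actionMeasure, Measure.finsetSum_apply]
  simp [Measure.dirac_apply' _ (measurableSet_singleton b), Set.indicator_apply]

lemma actionData_singleton {n : ℕ} (πD : Fin K → ℝ) (d : Fin n → Fin K) :
    actionData n πD {d} = ∏ i, ((πD (d i)).toNNReal : ℝ≥0∞) := by
  rw [actionData, ← Set.univ_pi_singleton, Measure.pi_pi]
  exact prod_congr rfl fun i _ => actionMeasure_singleton πD (d i)

lemma integral_actionData {n : ℕ} {πD : Fin K → ℝ} (hπD : ∀ a, 0 ≤ πD a)
    (F : (Fin n → Fin K) → ℝ) :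
    ∫ d, F d ∂actionData n πD = ∑ d, (∏ i, πD (d i)) * F d := by
  have : IsFiniteMeasure (actionData n πD) := by unfold actionData; infer_instance
  rw [integral_fintype Integrable.of_finite]
  refine sum_congr rfl fun d _ => ?_
  rw [Measure.real, actionData_singleton, smul_eq_mul, ENNReal.toReal_prod]
  simp only [ENNReal.coe_toReal, Real.coe_toNNReal _ (hπD _)]

lemma sum_prod_of_filter_eq {n : ℕ} (w : Fin K → ℝ) (a : Fin K) (S : Finset (Fin n)) :
    ∑ d : Fin n → Fin K with univ.filter (fun i => d i = a) = S, ∏ i, w (d i)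
      = w a ^ #S * (∑ b ∈ univ.erase a, w b) ^ (n - #S) := by
  have hfiber : (univ.filter fun d : Fin n → Fin K => univ.filter (fun i => d i = a) = S)
      = Fintype.piFinset fun i => if i ∈ S then {a} else univ.erase a := by
    ext d
    simp only [mem_filter, mem_univ, true_and, Fintype.mem_piFinset]
    constructor
    · rintro rfl i
      by_cases h : d i = a <;> simp [h]
    · intro h
      ext i
      specialize h i
      split_ifs at h with hi <;> simp_all
  rw [hfiber, ← prod_univ_sum]
  simp only [apply_ite (fun t => ∑ b ∈ t, w b), sum_singleton]
  rw [prod_ite, prod_const, prod_const, filter_mem_eq_inter, univ_inter, filter_not,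
    filter_mem_eq_inter, univ_inter, ← compl_eq_univ_sdiff, card_compl, Fintype.card_fin]

lemma sum_prod_mul_cntA (n : ℕ) (w : Fin K → ℝ) (a : Fin K) (g : ℕ → ℝ) :
    ∑ d : Fin n → Fin K, (∏ i, w (d i)) * g (cntA n d a)
      = ∑ k ∈ range (n + 1),
          n.choose k * w a ^ k * (∑ b ∈ univ.erase a, w b) ^ (n - k) * g k := by
  rw [← sum_fiberwise univ (fun d => univ.filter fun i => d i = a)]
  have hfiber : ∀ S : Finset (Fin n),
      ∑ d : Fin n → Fin K with univ.filter (fun i => d i = a) = S, (∏ i, w (d i)) * g (cntA n d a)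
        = w a ^ #S * (∑ b ∈ univ.erase a, w b) ^ (n - #S) * g #S := fun S => by
    rw [← sum_prod_of_filter_eq, sum_mul]
    exact sum_congr rfl fun d hd => by rw [cntA, (mem_filter.1 hd).2]
  rw [sum_congr rfl fun S _ => hfiber S, ← powerset_univ,
    sum_powerset_apply_card (fun k => w a ^ k * (∑ b ∈ univ.erase a, w b) ^ (n - k) * g k),
    card_univ, Fintype.card_fin]
  exact sum_congr rfl fun k _ => by rw [nsmul_eq_mul]; ring

lemma integral_comp_cntA {n : ℕ} {πD : Fin K → ℝ} (hπD : IsBehaviorPolicy πD) (a : Fin K)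
    (g : ℕ → ℝ) :
    ∫ d, g (cntA n d a) ∂actionData n πD = binomialExpectation n (πD a) g := by
  rw [integral_actionData fun b => (hπD.1 b).le, sum_prod_mul_cntA, binomialExpectation,
    sum_erase_eq_sub (mem_univ a), hπD.2]

lemma IsBehaviorPolicy.le_one {πD : Fin K → ℝ} (hπD : IsBehaviorPolicy πD) (a : Fin K) :
    πD a ≤ 1 :=
  hπD.2 ▸ single_le_sum (fun b _ => (hπD.1 b).le) (mem_univ a)

section Excess

variable (n : ℕ) {πD : Fin K → ℝ} (hπD : IsBehaviorPolicy πD) (a : Fin K)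
include hπD

lemma integral_inv_count_sub :
    ∫ d, ((if 0 < cntA n d a then (n : ℝ) / (cntA n d a : ℝ) else 0) - 1 / πD a)
        ∂actionData n πD
      = binomialExpectation n (πD a) (fun k => if 0 < k then (n : ℝ) / k else 0) - 1 / πD a := by
  rw [← binomialExpectation_sub_const]
  exact integral_comp_cntA hπD a fun k => (if 0 < k then (n : ℝ) / k else 0) - 1 / πD a

lemma integral_inv_count_sub_le_inv :
    ∫ d, ((if 0 < cntA n d a then (n : ℝ) / (cntA n d a : ℝ) else 0) - 1 / πD a)
        ∂actionData n πD ≤ 1 / πD a := by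
  rw [integral_inv_count_sub n hπD a]
  calc _ ≤ 2 / πD a - 1 / πD a := sub_le_sub_right
        (binomialExpectation_inv_count_le_two_div (hπD.1 a) (hπD.le_one a)) _
    _ = 1 / πD a := by ring

lemma integral_inv_count_sub_le :
    ∫ d, ((if 0 < cntA n d a then (n : ℝ) / (cntA n d a : ℝ) else 0) - 1 / πD a)
        ∂actionData n πD ≤ 3 / (n * πD a ^ 2) := by
  rw [integral_inv_count_sub n hπD a]
  linarith [binomialExpectation_inv_count_le_inv_add (n := n) (hπD.1 a) (hπD.le_one a)]

end Excess

lemma three_div_le_two_mul_sqrt {m : ℝ} (hm : 9 / 8 ≤ m) (x : ℝ) :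
    3 / m ≤ 2 * √(2 / m) * (√x + 1) := by
  have hm0 : 0 < m := by linarith
  have h : 3 / m / 2 ≤ √(2 / m) := by
    rw [Real.le_sqrt (by positivity) (by positivity), div_div, div_pow,
      div_le_div_iff₀ (by positivity) hm0]
    nlinarith
  nlinarith [Real.sqrt_nonneg x, Real.sqrt_nonneg (2 / m)]

theorem V3_bounds_general {K : ℕ} (n : ℕ)
    (π πD : Fin K → ℝ) (hπD : IsBehaviorPolicy πD)
    (σ2 : Fin K → ℝ) (hσ : ∀ a, 0 ≤ σ2 a) :
    (∑ a, (∫ d, ((if 0 < cntA n d a then (n : ℝ) / (cntA n d a : ℝ) else 0) - 1 / πD a)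
          ∂(actionData n πD)) * (π a ^ 2 * σ2 a)) ≤
        4 * ∑ a, π a ^ 2 * σ2 a / πD a ∧
    ((34 : ℝ) ≤ (n : ℝ) * (⨅ a, πD a) →
      (∑ a, (∫ d, ((if 0 < cntA n d a then (n : ℝ) / (cntA n d a : ℝ) else 0) - 1 / πD a)
            ∂(actionData n πD)) * (π a ^ 2 * σ2 a)) ≤
        2 * (∑ a, π a ^ 2 * σ2 a / πD a) * Real.sqrt (2 / ((n : ℝ) * (⨅ a, πD a))) *
          (Real.sqrt ((3 / 2) * Real.log ((n : ℝ) * (⨅ a, πD a) / 2)) + 1)) := by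
  have hc a : 0 ≤ π a ^ 2 * σ2 a := by have := hσ a; positivity
  set V₁ := ∑ a, π a ^ 2 * σ2 a / πD a
  have hV₁ : 0 ≤ V₁ := sum_nonneg fun a _ => div_nonneg (hc a) (hπD.1 a).le
  constructor
  · calc _ ≤ ∑ a, 1 / πD a * (π a ^ 2 * σ2 a) := sum_le_sum fun a _ =>
          mul_le_mul_of_nonneg_right (integral_inv_count_sub_le_inv n hπD a) (hc a)
      _ = V₁ := sum_congr rfl fun a _ => one_div_mul_eq_div _ _
      _ ≤ 4 * V₁ := by linarith
  · intro h34
    set m := (n : ℝ) * ⨅ a, πD a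
    have hm a : m ≤ n * πD a :=
      mul_le_mul_of_nonneg_left (ciInf_le (Set.finite_range πD).bddBelow a) n.cast_nonneg
    calc _ ≤ ∑ a, 3 / m * (π a ^ 2 * σ2 a / πD a) := sum_le_sum fun a _ => by
          calc _ ≤ 3 / (n * πD a ^ 2) * (π a ^ 2 * σ2 a) :=
                mul_le_mul_of_nonneg_right (integral_inv_count_sub_le n hπD a) (hc a)
            _ = 3 / (n * πD a) * (π a ^ 2 * σ2 a / πD a) := by ring
            _ ≤ 3 / m * (π a ^ 2 * σ2 a / πD a) := by
                have := hc a; have := hπD.1 a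
                gcongr
                exact hm a
      _ = 3 / m * V₁ := by rw [mul_sum]
      _ ≤ 2 * √(2 / m) * (√(3 / 2 * Real.log (m / 2)) + 1) * V₁ := by
          gcongr
          exact three_div_le_two_mul_sqrt (by linarith) _
      _ = _ := by ring

/-- bounds on
`V_{3,n} = Σ_a E[1{n(a)>0}·n/n(a) − 1/π_D(a)] π(a)² σ²_Φ(a)` in terms of
`V₁ = Σ_a π(a)² σ²_Φ(a)/π_D(a)`: always `V_{3,n} ≤ 4V₁`, and if
`n·π_D^* ≥ 34` (where `π_D^* = min_a π_D(a)`) then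
`V_{3,n} ≤ 2V₁·√(2/(n π_D^*))·(√((3/2) ln(n π_D^*/2)) + 1)`. -/
theorem V3_bounds {K : ℕ} (n : ℕ) (hn : 1 ≤ n)
    (π πD : Fin K → ℝ) (hπ : IsPolicy π) (hπD : IsBehaviorPolicy πD)
    (σ2 : Fin K → ℝ) (hσ : ∀ a, 0 ≤ σ2 a) :
    (∑ a, (∫ d, ((if 0 < cntA n d a then (n : ℝ) / (cntA n d a : ℝ) else 0) - 1 / πD a)
          ∂(actionData n πD)) * (π a ^ 2 * σ2 a)) ≤
        4 * ∑ a, π a ^ 2 * σ2 a / πD a ∧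
    ((34 : ℝ) ≤ (n : ℝ) * (⨅ a, πD a) →
      (∑ a, (∫ d, ((if 0 < cntA n d a then (n : ℝ) / (cntA n d a : ℝ) else 0) - 1 / πD a)
            ∂(actionData n πD)) * (π a ^ 2 * σ2 a)) ≤
        2 * (∑ a, π a ^ 2 * σ2 a / πD a) * Real.sqrt (2 / ((n : ℝ) * (⨅ a, πD a))) *
          (Real.sqrt ((3 / 2) * Real.log ((n : ℝ) * (⨅ a, πD a) / 2)) + 1)) :=
  V3_bounds_general n π πD hπD σ2 hσ

end OffPolicy
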